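/- Let v_1 < … < v_K be angles in (−π, π], B ∈ ℝ^K, α > 0. Define the extended grid v' of length 3K by v'_l = v_l − 2π for l = 1,…,K, v'_{K+l} = v_l, v'_{2K+l} = v_l + 2π, and B' of length 3K by repeating B three times. Let D' be the real-valued distance transform D'_l = min_{1 ≤ j ≤ 3K} (B'_j + α|v'_l − v'_j|). Then for every k = 1,…,K, min_{1 ≤ l ≤ K} (B_l + α d_T(v_k, v_l)) = D'_{K+k}, where d_T is the arc-length distance on the circle. -/

import Mathlib

/-!
Index the extended grid by `finProdFinEquiv : Fin 3 × Fin K ≃ Fin (3 * K)`, so that position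
`(c, l)` carries the data `B l` at the point `v l + 2π (c - 1)`. The minimum over the extended grid
then splits into a minimum over `l` of a minimum over the three copies `c`, and for fixed `l` the
inner minimum is `B l + α · min_c |v k - v l - 2π (c - 1)| = B l + α d_T(v k, v l)` because
`x ↦ B l + α x` is monotone.
-/

open Real Finset

/-- Arc-length distance on the circle, in terms of angle representatives in `(-π, π]`. -/
noncomputable def dCirc (u w : ℝ) : ℝ := min (|u - 2 * π - w|) (min (|u - w|) (|u + 2 * π - w|))

theorem Finset.inf'_univ_eq_inf'_inf'_of_equiv {ι κ J α : Type*} [Fintype ι] [Fintype κ]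
    [Fintype J] [Nonempty ι] [Nonempty κ] [SemilatticeInf α] (e : ι × κ ≃ J) (g : J → α)
    (h : (univ : Finset J).Nonempty) :
    univ.inf' h g =
      univ.inf' univ_nonempty fun k => univ.inf' univ_nonempty fun i => g (e (i, k)) :=
  eq_of_forall_le_iff fun a => by
    simp only [le_inf'_iff, mem_univ, true_implies, ← e.forall_congr_right, Prod.forall]
    exact forall_comm

noncomputable def unrollShift (c : Fin 3) : ℝ := 2 * π * ((c : ℝ) - 1)

theorem dCirc_eq_inf' (u w : ℝ) :
    dCirc u w = univ.inf' univ_nonempty fun c : Fin 3 => |u - (w + unrollShift c)| := by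
  simp only [show (univ : Finset (Fin 3)) = {2, 1, 0} by decide]
  norm_num [dCirc, unrollShift]
  ring_nf

theorem add_mul_dCirc_eq_inf' {α : ℝ} (hα : 0 ≤ α) (b u w : ℝ) :
    b + α * dCirc u w =
      univ.inf' univ_nonempty fun c : Fin 3 => b + α * |u - (w + unrollShift c)| := by
  have hmono : Monotone fun x : ℝ => b + α * x := (monotone_id.const_mul hα).const_add b
  rw [dCirc_eq_inf', apply_inf'_eq_inf'_comp (g := fun x => b + α * x) _ fun x y => hmono.map_min]
  rfl

theorem circular_distance_transform_by_unrolling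
    (K : ℕ) (hK : 0 < K) (v : Fin K → ℝ)
    (B : Fin K → ℝ) (α : ℝ) (hα : 0 < α)
    (v' : Fin (3 * K) → ℝ) (B' : Fin (3 * K) → ℝ)
    (hv' : ∀ l : Fin (3 * K),
      v' l = if h : (l : ℕ) < K then v ⟨l, h⟩ - 2 * π
        else if h2 : (l : ℕ) < 2 * K then v ⟨(l : ℕ) - K, by omega⟩
        else v ⟨(l : ℕ) - 2 * K, by have := l.isLt; omega⟩ + 2 * π)
    (hB' : ∀ l : Fin (3 * K), B' l = B ⟨(l : ℕ) % K, Nat.mod_lt _ hK⟩)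
    (D' : Fin (3 * K) → ℝ)
    (hD' : ∀ l : Fin (3 * K),
      D' l = Finset.univ.inf' ⟨⟨0, by omega⟩, Finset.mem_univ _⟩
        (fun j : Fin (3 * K) => B' j + α * |v' l - v' j|)) :
    ∀ k : Fin K,
      Finset.univ.inf' ⟨⟨0, hK⟩, Finset.mem_univ _⟩
          (fun l : Fin K => B l + α * dCirc (v k) (v l)) =
        D' ⟨K + (k : ℕ), by have := k.isLt; omega⟩ := by
  intro k
  have : Nonempty (Fin K) := ⟨k⟩
  have hgrid (c : Fin 3) (l : Fin K) : v' (finProdFinEquiv (c, l)) = v l + unrollShift c := by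
    obtain ⟨l, hl⟩ := l
    rw [hv', unrollShift]
    fin_cases c <;> simp only [finProdFinEquiv_apply_val] <;> split_ifs <;> try omega
    all_goals simp [mul_comm K]; try ring
  have hdata (c : Fin 3) (l : Fin K) : B' (finProdFinEquiv (c, l)) = B l :=
    (hB' _).trans (congrArg B (Fin.ext (by simp [Nat.mod_eq_of_lt l.isLt])))
  have hmiddle : (⟨K + k, by omega⟩ : Fin (3 * K)) = finProdFinEquiv (1, k) :=
    Fin.ext (by simp [add_comm])
  rw [hD', hmiddle]
  refine Eq.trans ?_ (inf'_univ_eq_inf'_inf'_of_equiv finProdFinEquiv _ _).symm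
  simp only [hgrid, hdata, unrollShift, Fin.val_one, Nat.cast_one, sub_self, mul_zero, add_zero]
  exact inf'_congr _ rfl fun l _ => add_mul_dCirc_eq_inf' hα.le _ _ _
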